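/- Let k ∈ [−1, 1] and let (X, Y) be a jointly Gaussian pair with mean zero, Var(X) = Var(Y) = 1, and Cov(X, Y) = k. Define k_DGP = (1 + 2(1 − k))^{−1/2}. Then E[exp(−½ (X − Y)²)] + k · E[(1 − (X − Y)²) exp(−½ (X − Y)²)] = k_DGP + k · k_DGP³. In particular, with k = k_SE(x,y) = exp(−½‖x−y‖²), the neural tangent kernel of the two-layer deep trigonometric network with bottleneck width H = 1, whose weight layers are trained by gradient descent on a squared loss with fixed features, equals k_NTK(x,y) = k_DGP(x,y) + k_SE(x,y) · k_DGP(x,y)³ with all hyperparameters set to one. -/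

import Mathlib

/-!
`X - Y` is centred Gaussian with variance `v = 2 - 2k`. Multiplying the `N(0, v)` density by
`exp (-c x²)` gives `(1 + 2cv)^(-1/2)` times the `N(0, v / (1 + 2cv))` density, so both expectations
reduce to the mass and the second moment of that narrower Gaussian: with `c = 1/2`,
`E[exp(-Z²/2)] = (1 + v)^(-1/2)` and
`E[(1 - Z²) exp(-Z²/2)] = (1 + v)^(-1/2) (1 - v / (1 + v)) = (1 + v)^(-3/2)`.
-/

open MeasureTheory ProbabilityTheory Real
open scoped NNReal

lemma gaussianPDFReal_zero_mul_exp_neg_mul_sq (v c : ℝ≥0) (x : ℝ) :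
    gaussianPDFReal 0 v x * exp (-c * x ^ 2)
      = (1 + 2 * c * v : ℝ) ^ (-(1 / 2) : ℝ) * gaussianPDFReal 0 (v / (1 + 2 * c * v)) x := by
  rcases eq_or_ne v 0 with rfl | hv
  · simp
  have hs : (0 : ℝ) < 1 + 2 * c * v := by positivity
  simp only [gaussianPDFReal, NNReal.coe_div, NNReal.coe_add, NNReal.coe_mul, NNReal.coe_one,
    NNReal.coe_ofNat, sub_zero]
  have hexp : -x ^ 2 / (2 * v) + -c * x ^ 2 = -x ^ 2 / (2 * (v / (1 + 2 * c * v))) := by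
    field_simp
    ring
  rw [rpow_neg hs.le, ← Real.sqrt_eq_rpow, mul_div_assoc', Real.sqrt_div' _ hs.le, mul_assoc,
    ← exp_add, hexp]
  field_simp

lemma integral_mul_exp_neg_mul_sq_gaussianReal (v c : ℝ≥0) (g : ℝ → ℝ) :
    ∫ x, g x * exp (-c * x ^ 2) ∂gaussianReal 0 v
      = (1 + 2 * c * v : ℝ) ^ (-(1 / 2) : ℝ) * ∫ x, g x ∂gaussianReal 0 (v / (1 + 2 * c * v)) := by
  rcases eq_or_ne v 0 with rfl | hv
  · simp
  have hv' : v / (1 + 2 * c * v) ≠ 0 := by positivity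
  simp only [integral_gaussianReal_eq_integral_smul hv, integral_gaussianReal_eq_integral_smul hv',
    smul_eq_mul, ← integral_const_mul]
  congr 1 with x
  linear_combination g x * gaussianPDFReal_zero_mul_exp_neg_mul_sq v c x

lemma integral_sq_gaussianReal_zero (v : ℝ≥0) : ∫ x, x ^ 2 ∂gaussianReal 0 v = v := by
  have := variance_fun_id_gaussianReal (μ := 0) (v := v)
  rw [variance_eq_integral measurable_id'.aemeasurable] at this
  simpa [integral_id_gaussianReal] using this

lemma integral_exp_neg_mul_sq_gaussianReal (v c : ℝ≥0) :
    ∫ x, exp (-c * x ^ 2) ∂gaussianReal 0 v = (1 + 2 * c * v : ℝ) ^ (-(1 / 2) : ℝ) := by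
  simpa using integral_mul_exp_neg_mul_sq_gaussianReal v c 1

lemma integral_one_sub_mul_sq_mul_exp_neg_mul_sq_gaussianReal (v c : ℝ≥0) :
    ∫ x, (1 - 2 * c * x ^ 2) * exp (-c * x ^ 2) ∂gaussianReal 0 v
      = ((1 + 2 * c * v : ℝ) ^ (-(1 / 2) : ℝ)) ^ 3 := by
  have hs : (0 : ℝ) < 1 + 2 * c * v := by positivity
  have hsq : Integrable (fun x : ℝ ↦ x ^ 2) (gaussianReal 0 (v / (1 + 2 * c * v))) :=
    (memLp_id_gaussianReal 2).integrable_sq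
  have hr : ((1 + 2 * c * v : ℝ) ^ (-(1 / 2) : ℝ)) ^ 2 = (1 + 2 * (c : ℝ) * v)⁻¹ := by
    rw [← rpow_natCast, ← rpow_mul hs.le]
    norm_num [rpow_neg_one]
  rw [integral_mul_exp_neg_mul_sq_gaussianReal, integral_sub (integrable_const _)
    (hsq.const_mul _), integral_const_mul, integral_sq_gaussianReal_zero, pow_succ, hr]
  simp only [integral_const, probReal_univ, smul_eq_mul, one_mul, NNReal.coe_div, NNReal.coe_add,
    NNReal.coe_one, NNReal.coe_mul, NNReal.coe_ofNat]
  field_simp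
  ring

/-- NTK of the two-layer deep trigonometric network (bottleneck width `H = 1`): for a centered
jointly Gaussian pair `(X, Y)` with unit variances and correlation `k ∈ [−1,1]` (joint
Gaussianity encoded by the linear-functional characterization), with
`k_DGP = (1 + 2(1 − k))^{−1/2}`,
`E[exp(−½(X−Y)²)] + k E[(1−(X−Y)²) exp(−½(X−Y)²)] = k_DGP + k k_DGP³`. -/
theorem stmt19 {Ω : Type*} [MeasurableSpace Ω] (μ : Measure Ω) [IsProbabilityMeasure μ]
    (k : ℝ) (hk : k ∈ Set.Icc (-1 : ℝ) 1)
    (X Y : Ω → ℝ)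
    (hgauss : ∀ a b : ℝ,
      Measure.map (fun ω => a * X ω + b * Y ω) μ
        = gaussianReal 0 (Real.toNNReal (a ^ 2 + b ^ 2 + 2 * a * b * k))) :
    (∫ ω, Real.exp (-(1 / 2) * (X ω - Y ω) ^ 2) ∂μ)
      + k * ∫ ω, (1 - (X ω - Y ω) ^ 2) * Real.exp (-(1 / 2) * (X ω - Y ω) ^ 2) ∂μ
      = (1 + 2 * (1 - k)) ^ (-(1 / 2) : ℝ)
        + k * ((1 + 2 * (1 - k)) ^ (-(1 / 2) : ℝ)) ^ 3 := by
  have hmap : μ.map (fun ω ↦ X ω - Y ω) = gaussianReal 0 (2 - 2 * k).toNNReal := by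
    convert hgauss 1 (-1) using 3 <;> ring
  have hXY : AEMeasurable (fun ω ↦ X ω - Y ω) μ :=
    .of_map_ne_zero (hmap ▸ IsProbabilityMeasure.ne_zero _)
  have hv : ((2 - 2 * k).toNNReal : ℝ) = 2 * (1 - k) := by
    rw [Real.coe_toNNReal _ (by linarith [hk.2])]; ring
  have h1 := integral_exp_neg_mul_sq_gaussianReal (2 - 2 * k).toNNReal (1 / 2)
  have h2 := integral_one_sub_mul_sq_mul_exp_neg_mul_sq_gaussianReal (2 - 2 * k).toNNReal (1 / 2)
  rw [← hmap, integral_map hXY (by fun_prop)] at h1 h2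
  norm_num [hv] at h1 h2
  simp only [neg_mul, h1, h2]
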